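/- arXiv:1603.02101 — 2 statements merged into one kernel-verified Lean document; each statement's English description precedes it below -/
import Mathlib

section
/- Let a : ℝ → ℝ be continuous, 1-periodic, with 0 < c ≤ a(x). For ε > 0 let u_ε be the solution on [0,1] of (a(x/ε) u_ε')' = 0 with u_ε(0)=0, u_ε(1)=1. Then as ε = 1/n with n → ∞ (n a positive integer), u_{1/n} converges uniformly on [0,1] to u₀(x) = x, the solution of the constant-coefficient equation with coefficient equal to the harmonic mean of a. -/
/-!
Write `g = 1 / a`. Substituting `s = n t` gives `∫₀ˣ g(n t) dt = x ∫₀¹ g + E(n x) / n`,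
where `E(y) = ∫₀ʸ g - y ∫₀¹ g`. The deviation `E` is continuous and periodic, hence bounded,
so the numerator of `u_{1/n}` converges uniformly to `x ∫₀¹ g`, while for `n ≥ 1` the
denominator equals `∫₀¹ g` exactly.
-/

open intervalIntegral Set Filter

open Function MeasureTheory

noncomputable def meanDeviation {E : Type*} [NormedAddCommGroup E] [NormedSpace ℝ E]
    (g : ℝ → E) (T y : ℝ) : E :=
  (∫ t in (0:ℝ)..y, g t) - (y / T) • ∫ t in (0:ℝ)..T, g t

section MeanDeviation

variable {E : Type*} [NormedAddCommGroup E] [NormedSpace ℝ E] {g : ℝ → E} {T : ℝ}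

theorem periodic_meanDeviation (hper : Periodic g T) (hT : T ≠ 0)
    (hg : ∀ t₁ t₂, IntervalIntegrable g volume t₁ t₂) : Periodic (meanDeviation g T) T := by
  intro y
  have hshift : ∫ t in y..y + T, g t = ∫ t in (0:ℝ)..T, g t := by
    simpa using hper.intervalIntegral_add_eq y 0
  rw [meanDeviation, ← integral_add_adjacent_intervals (hg 0 y) (hg y (y + T)), hshift,
    add_div, div_self hT, add_smul, one_smul, meanDeviation]
  abel

theorem continuous_meanDeviation (hg : ∀ t₁ t₂, IntervalIntegrable g volume t₁ t₂) :
    Continuous (meanDeviation g T) :=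
  (continuous_primitive hg 0).sub (by fun_prop)

theorem exists_norm_meanDeviation_le (hper : Periodic g T) (hT : T ≠ 0)
    (hg : ∀ t₁ t₂, IntervalIntegrable g volume t₁ t₂) :
    ∃ C, ∀ y, ‖meanDeviation g T y‖ ≤ C := by
  obtain ⟨C, hC⟩ := isBounded_iff_forall_norm_le.1 <|
    (periodic_meanDeviation hper hT hg).isBounded_of_continuous hT (continuous_meanDeviation hg)
  exact ⟨C, fun y => hC _ (mem_range_self y)⟩

theorem integral_comp_mul_eq_add_meanDeviation {k : ℝ} (hk : k ≠ 0) (x : ℝ) :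
    ∫ t in (0:ℝ)..x, g (k * t) =
      (x / T) • (∫ t in (0:ℝ)..T, g t) + k⁻¹ • meanDeviation g T (k * x) := by
  rw [integral_comp_mul_left g hk, mul_zero, meanDeviation, smul_sub, smul_smul,
    mul_div_assoc', inv_mul_cancel_left₀ hk]
  abel

theorem Function.Periodic.intervalIntegral_comp_natCast_mul (hper : Periodic g T) (hT : T ≠ 0)
    (hg : ∀ t₁ t₂, IntervalIntegrable g volume t₁ t₂) {n : ℕ} (hn : n ≠ 0) :
    ∫ t in (0:ℝ)..T, g (n * t) = ∫ t in (0:ℝ)..T, g t := by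
  rw [integral_comp_mul_eq_add_meanDeviation (Nat.cast_ne_zero.2 hn),
    (periodic_meanDeviation hper hT hg).nat_mul_eq, div_self hT, one_smul]
  simp [meanDeviation]

theorem tendstoUniformly_intervalIntegral_comp_mul (hper : Periodic g T) (hT : T ≠ 0)
    (hg : ∀ t₁ t₂, IntervalIntegrable g volume t₁ t₂) {ι : Type*} {l : Filter ι} {k : ι → ℝ}
    (hk : Tendsto k l atTop) :
    TendstoUniformly (fun i x => ∫ t in (0:ℝ)..x, g (k i * t))
      (fun x => (x / T) • ∫ t in (0:ℝ)..T, g t) l := by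
  obtain ⟨C, hC⟩ := exists_norm_meanDeviation_le hper hT hg
  rw [Metric.tendstoUniformly_iff]
  intro ε hε
  filter_upwards [hk.eventually_gt_atTop 0, hk.eventually_gt_atTop (C / ε)] with i hpos hlarge x
  rw [dist_eq_norm, integral_comp_mul_eq_add_meanDeviation hpos.ne', sub_add_cancel_left,
    norm_neg, norm_smul, norm_inv, Real.norm_of_nonneg hpos.le]
  calc (k i)⁻¹ * ‖meanDeviation g T (k i * x)‖ ≤ (k i)⁻¹ * C := by gcongr; exact hC _
    _ < ε := by rw [inv_mul_lt_iff₀ hpos]; exact (div_lt_iff₀ hε).1 hlarge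

end MeanDeviation

theorem stmt15 (a : ℝ → ℝ) (c : ℝ) (hc : 0 < c)
    (ha : Continuous a) (hper : Function.Periodic a 1) (hca : ∀ x, c ≤ a x) :
    TendstoUniformlyOn
      (fun (n : ℕ) (x : ℝ) =>
        (∫ t in (0:ℝ)..1, (a (n * t))⁻¹)⁻¹ * ∫ t in (0:ℝ)..x, (a (n * t))⁻¹)
      (fun x => x) atTop (Icc (0:ℝ) 1) := by
  have ha_pos : ∀ x, 0 < a x := fun x => hc.trans_le (hca x)
  have hg_per : Periodic (fun t => (a t)⁻¹) 1 := fun x => by simp only [hper x]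
  have hg_int : ∀ t₁ t₂, IntervalIntegrable (fun t => (a t)⁻¹) volume t₁ t₂ :=
    (ha.inv₀ fun x => (ha_pos x).ne').intervalIntegrable
  set M := ∫ t in (0:ℝ)..1, (a t)⁻¹
  have hM : 0 < M :=
    intervalIntegral_pos_of_pos_on (hg_int 0 1) (fun x _ => inv_pos.2 (ha_pos x)) one_pos
  have hnum := (tendstoUniformly_intervalIntegral_comp_mul hg_per one_ne_zero hg_int
    tendsto_natCast_atTop_atTop).tendstoUniformlyOn (s := Icc 0 1)
  have hlimit := (uniformContinuous_mul_left' M⁻¹).comp_tendstoUniformlyOn hnum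
  have hlimit_eq : (M⁻¹ * ·) ∘ (fun x : ℝ => (x / 1) • M) = fun x => x := by
    funext x
    simp only [comp_apply, div_one, smul_eq_mul]
    field_simp
  rw [hlimit_eq] at hlimit
  refine hlimit.congr ?_
  filter_upwards [eventually_ne_atTop 0] with n hn x _
  simp only [comp_apply, hg_per.intervalIntegral_comp_natCast_mul one_ne_zero hg_int hn, M]
end

section
/- Let a ∈ ℂ^N be a vector with all entries nonzero, and D = diag(a). Let F = (P; Q) be a unitary splitting. Then the homogenized coarse operator of D⁻¹, namely P D⁻¹ P* − P D⁻¹ Q*(Q D⁻¹ Q*)⁻¹ Q D⁻¹ P*, equals the inverse of P D P* whenever both P D P* and Q D⁻¹ Q* are invertible. -/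
/-! Let `M'` be a left inverse of `M`. Since `Pᴴ P = 1 - Qᴴ Q`, we get
`M' Pᴴ (P M Pᴴ) = Pᴴ - M' Qᴴ (Q M Pᴴ)`; multiplying on the left by `P` and by `Q` (`P Pᴴ = 1`,
`Q Pᴴ = 0`) shows that the Schur complement `P M' Pᴴ - P M' Qᴴ (Q M' Qᴴ)⁻¹ Q M' Pᴴ` is a left
inverse of `P M Pᴴ`. For square matrices over a commutative ring, a left inverse is the inverse. -/

open Matrix

namespace Matrix

section Compression

variable {R : Type*} {n m₁ m₂ : Type*} [Fintype n] [Fintype m₁] [Fintype m₂] [DecidableEq n]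
  {P : Matrix m₁ n R} {Q : Matrix m₂ n R} {P' : Matrix n m₁ R} {Q' : Matrix n m₂ R}
  {M M' : Matrix n n R}

theorem mul_mul_compression_eq_sub [Ring R] (hcover : P' * P + Q' * Q = 1) (hM : M' * M = 1) :
    M' * P' * (P * M * P') = P' - M' * Q' * (Q * M * P') := by
  have hP : P' * P = 1 - Q' * Q := eq_sub_of_add_eq hcover
  calc M' * P' * (P * M * P') = M' * (P' * P) * M * P' := by simp only [Matrix.mul_assoc]
    _ = M' * M * P' - M' * Q' * (Q * M * P') := by
      simp only [hP, Matrix.mul_sub, Matrix.sub_mul, Matrix.mul_one, Matrix.mul_assoc]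
    _ = P' - M' * Q' * (Q * M * P') := by rw [hM, Matrix.one_mul]

variable [CommRing R] [DecidableEq m₁] [DecidableEq m₂]

theorem inv_compression_eq_schur_complement (hcover : P' * P + Q' * Q = 1) (hPP : P * P' = 1)
    (hQP : Q * P' = 0) (hM : M' * M = 1) (hQMQ : IsUnit (Q * M' * Q')) :
    (P * M * P')⁻¹ = P * M' * P' - P * M' * Q' * (Q * M' * Q')⁻¹ * (Q * M' * P') := by
  have hS : (Q * M' * Q')⁻¹ * (Q * M' * Q') = 1 :=
    nonsing_inv_mul _ ((isUnit_iff_isUnit_det _).mp hQMQ)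
  have hkey := mul_mul_compression_eq_sub hcover hM
  have hPpart : P * (M' * P' * (P * M * P')) = 1 - P * M' * Q' * (Q * M * P') := by
    rw [hkey, Matrix.mul_sub, hPP]
    simp only [Matrix.mul_assoc]
  have hQpart : Q * (M' * P' * (P * M * P')) = -(Q * M' * Q' * (Q * M * P')) := by
    rw [hkey, Matrix.mul_sub, hQP, zero_sub]
    simp only [Matrix.mul_assoc]
  refine inv_eq_left_inv ?_
  calc (P * M' * P' - P * M' * Q' * (Q * M' * Q')⁻¹ * (Q * M' * P')) * (P * M * P')
      = P * (M' * P' * (P * M * P'))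
          - P * M' * Q' * (Q * M' * Q')⁻¹ * (Q * (M' * P' * (P * M * P'))) := by
        simp only [Matrix.sub_mul, Matrix.mul_assoc]
    _ = 1 - P * M' * Q' * (Q * M * P')
          + P * M' * Q' * ((Q * M' * Q')⁻¹ * (Q * M' * Q')) * (Q * M * P') := by
        rw [hPpart, hQpart, Matrix.mul_neg, sub_neg_eq_add]
        simp only [Matrix.mul_assoc]
    _ = 1 := by rw [hS, Matrix.mul_one, sub_add_cancel]

end Compression

end Matrix

theorem stmt19_general {N k : ℕ}
    (a : Fin N → ℂ) (ha : ∀ i, a i ≠ 0)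
    (P : Matrix (Fin k) (Fin N) ℂ) (Q : Matrix (Fin (N - k)) (Fin N) ℂ)
    (hF1 : (fromRows P Q)ᴴ * (fromRows P Q) = 1)
    (hF2 : (fromRows P Q) * (fromRows P Q)ᴴ = 1)
    (hQDQ : IsUnit (Q * (diagonal a)⁻¹ * Qᴴ)) :
    P * (diagonal a)⁻¹ * Pᴴ -
        P * (diagonal a)⁻¹ * Qᴴ * (Q * (diagonal a)⁻¹ * Qᴴ)⁻¹ *
          (Q * (diagonal a)⁻¹ * Pᴴ) =
      (P * diagonal a * Pᴴ)⁻¹ := by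
  have hcover : Pᴴ * P + Qᴴ * Q = 1 := by
    rwa [conjTranspose_fromRows_eq_fromCols_conjTranspose, fromCols_mul_fromRows] at hF1
  rw [conjTranspose_fromRows_eq_fromCols_conjTranspose, fromRows_mul_fromCols, ← fromBlocks_one,
    fromBlocks_inj] at hF2
  obtain ⟨hPP, -, hQP, -⟩ := hF2
  have hD : IsUnit (diagonal a) := isUnit_diagonal.mpr (Pi.isUnit_iff.mpr fun i ↦ (ha i).isUnit)
  exact (inv_compression_eq_schur_complement hcover hPP hQP
    (nonsing_inv_mul _ ((isUnit_iff_isUnit_det _).mp hD)) hQDQ).symm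

theorem stmt19 {N k : ℕ} (hk : k ≤ N)
    (a : Fin N → ℂ) (ha : ∀ i, a i ≠ 0)
    (P : Matrix (Fin k) (Fin N) ℂ) (Q : Matrix (Fin (N - k)) (Fin N) ℂ)
    (hF1 : (fromRows P Q)ᴴ * (fromRows P Q) = 1)
    (hF2 : (fromRows P Q) * (fromRows P Q)ᴴ = 1)
    (hPDP : IsUnit (P * diagonal a * Pᴴ))
    (hQDQ : IsUnit (Q * (diagonal a)⁻¹ * Qᴴ)) :
    P * (diagonal a)⁻¹ * Pᴴ -
        P * (diagonal a)⁻¹ * Qᴴ * (Q * (diagonal a)⁻¹ * Qᴴ)⁻¹ *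
          (Q * (diagonal a)⁻¹ * Pᴴ) =
      (P * diagonal a * Pᴴ)⁻¹ :=
  stmt19_general a ha P Q hF1 hF2 hQDQ
end
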